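/- arXiv:1504.07728 — 2 statements merged into one kernel-verified Lean document; each statement's English description precedes it below -/
import Mathlib

section
/- The utility function U(p) = -p^w - d·exp(-v a (c p)^b) with a < 0, b < 0, c > 0, d > 0, v > 0 and w ≥ 1 satisfies U''(p) < 0 for all p > 0, i.e., U is strictly concave on (0, ∞). -/
/-! Writing `u(p) = -p ^ w - d * exp (g p)` with `g p = k * (c * p) ^ b`, one has
`u'' = -w (w - 1) p ^ (w - 2) - d * exp (g p) * (g' p ^ 2 + g'' p)` on `p > 0`, and
`g'' p = k b (b - 1) c² (c p) ^ (b - 2)` is positive as soon as `k > 0` and `b < 0`. -/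

open Real Filter Topology

theorem deriv_deriv_eq_of_eventually_hasDerivAt {f f' : ℝ → ℝ} {f'' x : ℝ}
    (hf : ∀ᶠ y in 𝓝 x, HasDerivAt f (f' y) y) (hf' : HasDerivAt f' f'' x) :
    deriv (deriv f) x = f'' := by
  have hderiv : deriv f =ᶠ[𝓝 x] f' := hf.mono fun _ hy => hy.deriv
  rw [hderiv.deriv_eq, hf'.deriv]

theorem hasDerivAt_mul_rpow_const {c r x : ℝ} (hx : c * x ≠ 0) :
    HasDerivAt (fun y => (c * y) ^ r) (r * c * (c * x) ^ (r - 1)) x := by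
  convert ((hasDerivAt_id' x).const_mul c).rpow_const (p := r) (Or.inl hx) using 1
  ring

theorem hasDerivAt_exp_mul_deriv {g g' : ℝ → ℝ} {g'' x : ℝ} (hg : HasDerivAt g (g' x) x)
    (hg' : HasDerivAt g' g'' x) :
    HasDerivAt (fun y => exp (g y) * g' y) (exp (g x) * (g' x ^ 2 + g'')) x :=
  (hg.exp.mul hg').congr_deriv (by ring)

section Utility

variable {k b c d w x : ℝ}

theorem hasDerivAt_utility (hc : c ≠ 0) (hx : x ≠ 0) :
    HasDerivAt (fun p => -p ^ w - d * exp (k * (c * p) ^ b))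
      (-(w * x ^ (w - 1)) - d * (exp (k * (c * x) ^ b) * (k * (b * c * (c * x) ^ (b - 1))))) x :=
  (hasDerivAt_rpow_const (Or.inl hx)).neg.sub
    (((hasDerivAt_mul_rpow_const (mul_ne_zero hc hx)).const_mul k).exp.const_mul d)

theorem hasDerivAt_deriv_utility (hc : c ≠ 0) (hx : x ≠ 0) :
    HasDerivAt
      (fun p => -(w * p ^ (w - 1)) -
        d * (exp (k * (c * p) ^ b) * (k * (b * c * (c * p) ^ (b - 1)))))
      (-(w * ((w - 1) * x ^ (w - 1 - 1))) - d * (exp (k * (c * x) ^ b) *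
        ((k * (b * c * (c * x) ^ (b - 1))) ^ 2 +
          k * (b * c * ((b - 1) * c * (c * x) ^ (b - 1 - 1)))))) x := by
  have hcx := mul_ne_zero hc hx
  exact ((hasDerivAt_rpow_const (Or.inl hx)).const_mul w).neg.sub <|
    (hasDerivAt_exp_mul_deriv ((hasDerivAt_mul_rpow_const hcx).const_mul k)
      (((hasDerivAt_mul_rpow_const hcx).const_mul (b * c)).const_mul k)).const_mul d

theorem deriv_deriv_utility_neg (hk : 0 < k) (hb : b < 0) (hc : 0 < c) (hd : 0 < d) (hw : 1 ≤ w)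
    (hx : 0 < x) :
    deriv (deriv (fun p => -p ^ w - d * exp (k * (c * p) ^ b))) x < 0 := by
  have hderiv : ∀ᶠ y in 𝓝 x, HasDerivAt (fun p => -p ^ w - d * exp (k * (c * p) ^ b))
      (-(w * y ^ (w - 1)) - d * (exp (k * (c * y) ^ b) * (k * (b * c * (c * y) ^ (b - 1))))) y :=
    (lt_mem_nhds hx).mono fun y hy => hasDerivAt_utility hc.ne' hy.ne'
  rw [deriv_deriv_eq_of_eventually_hasDerivAt hderiv (hasDerivAt_deriv_utility hc.ne' hx.ne')]
  have hpow_nonneg : 0 ≤ w * ((w - 1) * x ^ (w - 1 - 1)) := by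
    have : 0 ≤ w - 1 := by linarith
    positivity
  set g' := k * (b * c * (c * x) ^ (b - 1))
  set g'' := k * (b * c * ((b - 1) * c * (c * x) ^ (b - 1 - 1)))
  have hg''_pos : 0 < g'' := by
    have hb' : 0 < -b := by linarith
    have hb1 : 0 < 1 - b := by linarith
    calc 0 < k * (-b) * (1 - b) * c ^ 2 * (c * x) ^ (b - 1 - 1) := by positivity
      _ = g'' := by ring
  have hexp_term_pos : 0 < d * (exp (k * (c * x) ^ b) * (g' ^ 2 + g'')) :=
    mul_pos hd (mul_pos (exp_pos _) (add_pos_of_nonneg_of_pos (sq_nonneg g') hg''_pos))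
  linarith

end Utility

theorem utility_strictly_concave (a b c d v w : ℝ) (ha : a < 0) (hb : b < 0) (hc : 0 < c)
    (hd : 0 < d) (hv : 0 < v) (hw : 1 ≤ w) :
    (∀ p : ℝ, 0 < p →
      deriv (deriv (fun p : ℝ => -p ^ w - d * Real.exp (-v * a * (c * p) ^ b))) p < 0) ∧
    StrictConcaveOn ℝ (Set.Ioi 0)
      (fun p : ℝ => -p ^ w - d * Real.exp (-v * a * (c * p) ^ b)) := by
  have hk : 0 < -v * a := mul_pos_of_neg_of_neg (neg_neg_of_pos hv) ha
  have hdd := fun p (hp : 0 < p) => deriv_deriv_utility_neg hk hb hc hd hw hp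
  refine ⟨hdd, strictConcaveOn_of_deriv2_neg' (convex_Ioi 0) ?_ hdd⟩
  exact fun p hp => (hasDerivAt_utility hc.ne' (ne_of_gt hp)).continuousAt.continuousWithinAt
end

section
/- Under the assumptions a < 0, b < 0, c > 0, d > 0, v > 0, w ≥ 1, the utility U(p) = -p^w - d exp(-v a (c p)^b) attains a maximum at a unique interior point p* ∈ (0, ∞) characterized by U'(p*) = 0. -/
/-!
With `k = -v a > 0`, on `(0, ∞)` the utility is `U q = -q ^ w - d exp (k c ^ b q ^ b)`. Since
`q ^ b = exp (b log q)` with `b < 0` is strictly convex, so is `d exp (k c ^ b q ^ b)`, and `-q ^ w`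
is concave for `w ≥ 1`; hence `U` is strictly concave and has at most one maximizer. It is
continuous and tends to `-∞` at both ends of `(0, ∞)`, so it attains its maximum, at an interior
point, where its derivative vanishes.
-/

open Real Set Filter Topology

theorem StrictConvexOn.const_mul {s : Set ℝ} {f : ℝ → ℝ} {c : ℝ} (hf : StrictConvexOn ℝ s f)
    (hc : 0 < c) : StrictConvexOn ℝ s fun x => c * f x :=
  ⟨hf.1, fun x hx y hy hxy a b ha hb hab => by
    have := mul_lt_mul_of_pos_left (hf.2 hx hy hxy ha hb hab) hc
    simp only [smul_eq_mul] at this ⊢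
    linarith⟩

theorem StrictConvexOn.exp {s : Set ℝ} {f : ℝ → ℝ} (hf : StrictConvexOn ℝ s f) :
    StrictConvexOn ℝ s fun x => exp (f x) :=
  ⟨hf.1, fun _ hx _ hy hxy _ _ ha hb hab =>
    (exp_lt_exp.2 (hf.2 hx hy hxy ha hb hab)).trans_le
      (convexOn_exp.2 (mem_univ _) (mem_univ _) ha.le hb.le hab)⟩

theorem strictConvexOn_rpow_of_neg {p : ℝ} (hp : p < 0) :
    StrictConvexOn ℝ (Ioi 0) fun x : ℝ => x ^ p := by
  have h : StrictConvexOn ℝ (Ioi 0) fun x => exp (-p * -log x) :=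
    (strictConcaveOn_log_Ioi.neg.const_mul (neg_pos.2 hp)).exp
  refine h.congr fun x hx => ?_
  simp only [rpow_def_of_pos (mem_Ioi.1 hx), neg_mul_neg, mul_comm]

section Cost

variable {K b d : ℝ}

theorem strictConvexOn_mul_exp_mul_rpow (hd : 0 < d) (hK : 0 < K) (hb : b < 0) :
    StrictConvexOn ℝ (Ioi 0) fun q : ℝ => d * exp (K * q ^ b) :=
  ((strictConvexOn_rpow_of_neg hb).const_mul hK).exp.const_mul hd

theorem tendsto_mul_exp_mul_rpow_nhdsGT_zero (hd : 0 < d) (hK : 0 < K) (hb : b < 0) :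
    Tendsto (fun q : ℝ => d * exp (K * q ^ b)) (𝓝[>] 0) atTop :=
  (tendsto_exp_atTop.comp ((tendsto_rpow_neg_nhdsGT_zero hb).const_mul_atTop hK)).const_mul_atTop
    hd

end Cost

theorem exists_isMaxOn_Ioi_of_tendsto_atBot {f : ℝ → ℝ} {a : ℝ} (hf : ContinuousOn f (Ioi a))
    (h_left : Tendsto f (𝓝[>] a) atBot) (h_right : Tendsto f atTop atBot) :
    ∃ p ∈ Ioi a, IsMaxOn f (Ioi a) p := by
  obtain ⟨ε, hε, h_left⟩ : ∃ ε ∈ Ioi a, ∀ q ∈ Ioc a ε, f q < f (a + 1) :=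
    mem_nhdsGT_iff_exists_Ioc_subset.1 (h_left.eventually_lt_atBot _)
  obtain ⟨M, h_right⟩ : ∃ M, ∀ q ≥ M, f q < f (a + 1) :=
    (h_right.eventually_lt_atBot _).exists_forall_of_atTop
  have hK : Icc (min ε (a + 1)) (max M (a + 1)) ⊆ Ioi a := fun q hq =>
    (lt_min hε (lt_add_one a)).trans_le hq.1
  obtain ⟨p, hp, hmax⟩ := isCompact_Icc.exists_isMaxOn
    ⟨a + 1, min_le_right _ _, le_max_right _ _⟩ (hf.mono hK)
  have hp_ge : f (a + 1) ≤ f p := hmax ⟨min_le_right _ _, le_max_right _ _⟩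
  refine ⟨p, hK hp, fun q hq => ?_⟩
  rcases lt_or_ge q (min ε (a + 1)) with hq_lt | hq_ge
  · exact (h_left q ⟨hq, hq_lt.le.trans (min_le_left _ _)⟩).le.trans hp_ge
  rcases le_or_gt q (max M (a + 1)) with hq_le | hq_gt
  · exact hmax ⟨hq_ge, hq_le⟩
  · exact (h_right q ((le_max_left _ _).trans hq_gt.le)).le.trans hp_ge

noncomputable def utility (k b c d w q : ℝ) : ℝ := -q ^ w - d * exp (k * (c * q) ^ b)

section Utility

variable {k b c d w : ℝ}

theorem utility_eqOn (hc : 0 < c) :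
    EqOn (utility k b c d w) (fun q => -q ^ w - d * exp (k * c ^ b * q ^ b)) (Ioi 0) :=
  fun q hq => by
    simp only [utility, mul_rpow hc.le (mem_Ioi.1 hq).le, mul_assoc]

theorem strictConcaveOn_utility (hk : 0 < k) (hb : b < 0) (hc : 0 < c) (hd : 0 < d) (hw : 1 ≤ w) :
    StrictConcaveOn ℝ (Ioi 0) (utility k b c d w) :=
  (((convexOn_rpow hw).subset Ioi_subset_Ici_self (convex_Ioi 0)).neg.sub_strictConvexOn
    (strictConvexOn_mul_exp_mul_rpow hd (by positivity) hb)).congr (utility_eqOn hc).symm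

theorem tendsto_utility_nhdsGT_zero (hk : 0 < k) (hb : b < 0) (hc : 0 < c) (hd : 0 < d) :
    Tendsto (utility k b c d w) (𝓝[>] 0) atBot := by
  refine tendsto_atBot_mono' _ ?_ (tendsto_neg_atTop_atBot.comp
    (tendsto_mul_exp_mul_rpow_nhdsGT_zero hd (by positivity : 0 < k * c ^ b) hb))
  filter_upwards [self_mem_nhdsWithin] with q hq
  rw [utility_eqOn hc hq]
  have : 0 ≤ q ^ w := rpow_nonneg hq.le w
  simp only [Function.comp_apply]
  linarith

theorem tendsto_utility_atTop (hd : 0 ≤ d) (hw : 0 < w) :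
    Tendsto (utility k b c d w) atTop atBot := by
  refine tendsto_atBot_mono (fun q => ?_) (tendsto_neg_atTop_atBot.comp (tendsto_rpow_atTop hw))
  have : 0 ≤ d * exp (k * (c * q) ^ b) := by positivity
  simp only [utility, Function.comp_apply]
  linarith

end Utility

theorem utility_unique_interior_maximizer (a b c d v w : ℝ) (ha : a < 0) (hb : b < 0)
    (hc : 0 < c) (hd : 0 < d) (hv : 0 < v) (hw : 1 ≤ w) :
    ∃! p : ℝ, 0 < p ∧
      IsMaxOn (fun q : ℝ => -q ^ w - d * Real.exp (-v * a * (c * q) ^ b)) (Set.Ioi 0) p ∧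
      deriv (fun q : ℝ => -q ^ w - d * Real.exp (-v * a * (c * q) ^ b)) p = 0 := by
  show ∃! p, 0 < p ∧ IsMaxOn (utility (-v * a) b c d w) (Ioi 0) p ∧
    deriv (utility (-v * a) b c d w) p = 0
  have hk : 0 < -v * a := mul_pos_of_neg_of_neg (neg_neg_of_pos hv) ha
  have hU := strictConcaveOn_utility hk hb hc hd hw
  obtain ⟨p, hp, hmax⟩ :=
    exists_isMaxOn_Ioi_of_tendsto_atBot (hU.concaveOn.continuousOn isOpen_Ioi)
      (tendsto_utility_nhdsGT_zero hk hb hc hd) (tendsto_utility_atTop hd.le (by linarith))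
  refine ⟨p, ⟨hp, hmax, (hmax.isLocalMax (Ioi_mem_nhds hp)).deriv_eq_zero⟩, ?_⟩
  rintro q ⟨hq, hq_max, -⟩
  exact hU.eq_of_isMaxOn hq_max hmax hq hp
end
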